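/- arXiv:2010.04583 — 3 statements merged into one kernel-verified Lean document; each statement's English description precedes it below -/
import Mathlib

section
/- For every integer t ≥ 1, the sum over all integers x of P(x,t) equals 1, i.e. Σ_{x∈ℤ} |a(x,t)|² = 1. -/
open scoped BigOperators

/-- The final x-coordinate of a checker path from `(0,0)` encoded by its sequence of moves
(`true` = move `(1,1)`, `false` = move `(-1,1)`). -/
def moveEndpoint {n : ℕ} (d : Fin n → Bool) : ℤ :=
  ∑ k, (if d k then (1 : ℤ) else -1)

/-- The number of turns of a checker path encoded by its sequence of moves. -/
def nturns {n : ℕ} (d : Fin n → Bool) : ℕ :=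
  ((List.ofFn d).zip (List.ofFn d).tail).countP fun p => p.1 != p.2

/-- Checker paths from `(0,0)` to `(x,t)` whose first step is to `(1,1)`,
encoded by their sequences of moves. -/
def cpaths (x t : ℤ) : Finset (Fin t.toNat → Bool) :=
  Finset.univ.filter fun d => moveEndpoint d = x ∧ (List.ofFn d).headI = true

/-- Feynman checkers amplitude `a(x,t) = 2^((1-t)/2) * i * ∑ₛ (-i)^turns(s)`. -/
noncomputable def a (x t : ℤ) : ℂ :=
  (Real.sqrt 2 : ℂ) ^ (1 - t) * Complex.I * ∑ d ∈ cpaths x t, (-Complex.I) ^ nturns d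

/-! Group the paths by their first move `b` and last move `c`, and let `A_bc(x)` be the sum of
`(-i)^turns` over them (`turnSum`). The parity of the number of turns records whether `b = c`, so
`A_++` is real and `A_+-` imaginary, and `P(x,t) = 2^(1-t) (|A_++|² + |A_+-|²)`. Removing the first
move gives `A_bc(x) = A_bc(x ∓ 1) - i A_(¬b)c(x ∓ 1)`, and `|u - iw|² + |w - iu|² = 2(|u|² + |w|²)`
shows that `∑ₓ (|A_+c|² + |A_-c|²)` doubles with every step. The reflection `x ↦ -x`, which
exchanges `A_-+` and `A_+-`, turns this into `∑ₓ (|A_++|² + |A_+-|²) = 2^(t-1)`. -/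

open Complex

def moveDelta (b : Bool) : ℤ := if b then 1 else -1

lemma moveEndpoint_cons {n : ℕ} (b : Bool) (e : Fin n → Bool) :
    moveEndpoint (Fin.cons b e : Fin (n + 1) → Bool) = moveDelta b + moveEndpoint e := by
  simp [moveEndpoint, Fin.sum_univ_succ, moveDelta]

lemma nturns_cons {n : ℕ} (b : Bool) (e : Fin (n + 1) → Bool) :
    nturns (Fin.cons b e : Fin (n + 2) → Bool) = (if b = e 0 then 0 else 1) + nturns e := by
  rw [nturns, nturns, List.ofFn_cons, List.ofFn_succ (f := e)]
  cases b <;> cases e 0 <;> simp <;> omega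

lemma nturns_not {n : ℕ} (d : Fin n → Bool) : nturns (fun k => !d k) = nturns d := by
  have hmap : List.ofFn (fun k => !d k) = (List.ofFn d).map (!·) := by
    rw [List.map_ofFn]; rfl
  have hne :
      ((fun p : Bool × Bool => p.1 != p.2) ∘ Prod.map (!·) (!·)) = fun p => p.1 != p.2 := by
    funext p; rcases p with ⟨_ | _, _ | _⟩ <;> rfl
  rw [nturns, nturns, hmap, ← List.map_tail, List.zip_map, List.countP_map, hne]

lemma moveEndpoint_not {n : ℕ} (d : Fin n → Bool) :
    moveEndpoint (fun k => !d k) = -moveEndpoint d := by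
  simp only [moveEndpoint, ← Finset.sum_neg_distrib]
  exact Finset.sum_congr rfl fun k _ => by
    rcases Bool.eq_false_or_eq_true (d k) with h | h <;> simp [h]

lemma abs_moveEndpoint_le {n : ℕ} (d : Fin n → Bool) : |moveEndpoint d| ≤ n := by
  calc |moveEndpoint d| ≤ ∑ k, |if d k then (1 : ℤ) else -1| := Finset.abs_sum_le_sum_abs _ _
    _ = n := by simp [apply_ite]

noncomputable def turnSum (n : ℕ) (b c : Bool) (x : ℤ) : ℂ :=
  ∑ d : Fin (n + 1) → Bool with d 0 = b ∧ d (Fin.last n) = c ∧ moveEndpoint d = x,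
    (-I) ^ nturns d

lemma turnSum_zero (b c : Bool) (x : ℤ) :
    turnSum 0 b c x = if b = c ∧ x = moveDelta b then 1 else 0 := by
  rw [turnSum, Finset.sum_filter, ← (Equiv.funUnique (Fin 1) Bool).symm.sum_comp,
    Fintype.sum_bool]
  cases b <;> cases c <;> simp [moveEndpoint, nturns, moveDelta, eq_comm]

lemma turnSum_succ (n : ℕ) (b c : Bool) (x : ℤ) :
    turnSum (n + 1) b c x =
      turnSum n b c (x - moveDelta b) - I * turnSum n (!b) c (x - moveDelta b) := by
  simp only [turnSum, Finset.sum_filter, Finset.mul_sum, ← Finset.sum_sub_distrib]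
  rw [← (Fin.consEquiv fun _ => Bool).sum_comp, Fintype.sum_prod_type, Fintype.sum_eq_single b]
  · refine Finset.sum_congr rfl fun e _ => ?_
    have hcons : (Fin.consEquiv fun _ => Bool) (b, e) = Fin.cons b e := rfl
    have hx : moveDelta b + moveEndpoint e = x ↔ moveEndpoint e = x - moveDelta b := by
      constructor <;> intro h <;> omega
    rw [hcons, moveEndpoint_cons, nturns_cons]
    simp only [Fin.cons_zero, ← Fin.succ_last, Fin.cons_succ, hx, true_and]
    rcases Bool.eq_false_or_eq_true b with rfl | rfl <;>
      rcases Bool.eq_false_or_eq_true (e 0) with h0 | h0 <;>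
      simp [h0, pow_add] <;> split_ifs <;> simp
  · intro a ha
    exact Finset.sum_eq_zero fun e _ => if_neg fun h => ha (by simpa using h.1)

lemma turnSum_not_not_neg (n : ℕ) (b c : Bool) (x : ℤ) :
    turnSum n (!b) (!c) (-x) = turnSum n b c x := by
  have hinv : Function.Involutive fun (d : Fin (n + 1) → Bool) k => !d k :=
    fun d => funext fun k => Bool.not_not (d k)
  rw [turnSum, turnSum, Finset.sum_filter, Finset.sum_filter]
  refine Fintype.sum_equiv hinv.toPerm _ _ fun d => ?_
  simp only [Function.Involutive.coe_toPerm, moveEndpoint_not, nturns_not,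
    Bool.not_eq_eq_eq_not, neg_eq_iff_eq_neg]

lemma even_nturns_iff {n : ℕ} (d : Fin (n + 1) → Bool) :
    Even (nturns d) ↔ d 0 = d (Fin.last n) := by
  induction n with
  | zero => simp [nturns]
  | succ n ih =>
    rw [← Fin.cons_self_tail d, nturns_cons, Nat.even_add, ih, Fin.cons_zero, ← Fin.succ_last,
      Fin.cons_succ]
    simp only [Fin.tail]
    rcases Bool.eq_false_or_eq_true (d 0) with h | h <;>
      rcases Bool.eq_false_or_eq_true (d 1) with h' | h' <;> simp [h, h']

lemma im_turnSum_self (n : ℕ) (b : Bool) (x : ℤ) : (turnSum n b b x).im = 0 := by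
  rw [turnSum, Complex.im_sum]
  refine Finset.sum_eq_zero fun d hd => ?_
  obtain ⟨h0, hlast, -⟩ := (Finset.mem_filter.mp hd).2
  obtain ⟨m, hm⟩ := (even_nturns_iff d).mpr (h0.trans hlast.symm)
  rw [hm, ← two_mul, pow_mul]
  rcases neg_one_pow_eq_or ℂ m with h | h <;> simp [h]

lemma re_turnSum_of_ne {n : ℕ} {b c : Bool} (hbc : b ≠ c) (x : ℤ) :
    (turnSum n b c x).re = 0 := by
  rw [turnSum, Complex.re_sum]
  refine Finset.sum_eq_zero fun d hd => ?_
  obtain ⟨h0, hlast, -⟩ := (Finset.mem_filter.mp hd).2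
  have hodd : ¬Even (nturns d) := by rw [even_nturns_iff, h0, hlast]; exact hbc
  obtain ⟨m, hm⟩ := Nat.not_even_iff_odd.mp hodd
  rw [hm, pow_succ, pow_mul]
  rcases neg_one_pow_eq_or ℂ m with h | h <;> simp [h]

lemma turnSum_eq_zero_of_lt_abs {n : ℕ} {x : ℤ} (hx : (n : ℤ) + 1 < |x|) (b c : Bool) :
    turnSum n b c x = 0 := by
  refine Finset.sum_eq_zero fun d hd => absurd (abs_moveEndpoint_le d) ?_
  rw [(Finset.mem_filter.mp hd).2.2.2]
  push_cast
  exact hx.not_ge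

lemma summable_of_turnSum_eq_zero {n : ℕ} {f : ℤ → ℝ}
    (hf : ∀ x, (∀ b c, turnSum n b c x = 0) → f x = 0) : Summable f :=
  summable_of_ne_finset_zero (s := Finset.Icc (-(n + 1 : ℤ)) (n + 1)) fun x hx =>
    hf x (turnSum_eq_zero_of_lt_abs (by rw [Finset.mem_Icc, ← abs_le] at hx; omega))

lemma normSq_sub_I_mul_add_normSq_sub_I_mul (u w : ℂ) :
    normSq (u - I * w) + normSq (w - I * u) = 2 * (normSq u + normSq w) := by
  simp only [normSq_apply, sub_re, sub_im, mul_re, mul_im, I_re, I_im]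
  ring

lemma tsum_normSq_turnSum_fixed_last (n : ℕ) (c : Bool) :
    ∑' x, (normSq (turnSum n true c x) + normSq (turnSum n false c x)) = 2 ^ n := by
  have hsum : ∀ (m : ℕ) (g : ℂ → ℂ → ℝ), g 0 0 = 0 →
      Summable fun x => g (turnSum m true c x) (turnSum m false c x) := fun m g hg =>
    summable_of_turnSum_eq_zero fun x hx => by rw [hx, hx, hg]
  induction n with
  | zero =>
    rw [tsum_eq_sum (s := {-1, 1}) fun x hx => ?_]
    · cases c <;> simp [turnSum_zero, moveDelta]
    · simp only [Finset.mem_insert, Finset.mem_singleton, not_or] at hx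
      simp [turnSum_zero, moveDelta, hx.1, hx.2]
  | succ n ih =>
    set u := fun y => turnSum n true c y
    set w := fun y => turnSum n false c y
    have htrue : ∑' x, normSq (turnSum (n + 1) true c x) = ∑' y, normSq (u y - I * w y) := by
      rw [← (Equiv.addRight (1 : ℤ)).tsum_eq]
      simp [turnSum_succ, moveDelta, u, w]
    have hfalse : ∑' x, normSq (turnSum (n + 1) false c x) = ∑' y, normSq (w y - I * u y) := by
      rw [← (Equiv.subRight (1 : ℤ)).tsum_eq]
      simp [turnSum_succ, moveDelta, u, w]
    rw [(hsum _ (fun p _ => normSq p) (by simp)).tsum_add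
        (hsum _ (fun _ q => normSq q) (by simp)), htrue, hfalse,
      ← (hsum _ (fun p q => normSq (p - I * q)) (by simp)).tsum_add
        (hsum _ (fun p q => normSq (q - I * p)) (by simp))]
    simp only [normSq_sub_I_mul_add_normSq_sub_I_mul, tsum_mul_left, ih, pow_succ, mul_comm]

lemma tsum_normSq_turnSum_fixed_first (n : ℕ) :
    ∑' x, (normSq (turnSum n true true x) + normSq (turnSum n true false x)) = 2 ^ n := by
  have hsum : ∀ b c : Bool, Summable fun x => normSq (turnSum n b c x) := fun b c =>
    summable_of_turnSum_eq_zero fun x hx => by rw [hx, map_zero]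
  have hreflect :
      ∑' x, normSq (turnSum n false true x) = ∑' x, normSq (turnSum n true false x) := by
    rw [← (Equiv.neg ℤ).tsum_eq]
    simp [← turnSum_not_not_neg n false true]
  rw [(hsum _ _).tsum_add (hsum _ _), ← hreflect, ← (hsum _ _).tsum_add (hsum _ _)]
  exact tsum_normSq_turnSum_fixed_last n true

lemma sum_cpaths_eq_turnSum (m : ℕ) (x : ℤ) :
    ∑ d ∈ cpaths x (m + 1), (-I) ^ nturns d =
      turnSum m true true x + turnSum m true false x := by
  simp only [cpaths, turnSum, Finset.sum_filter, ← Finset.sum_add_distrib]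
  refine Finset.sum_congr rfl fun (d : Fin (m + 1) → Bool) _ => ?_
  have hhead : (List.ofFn d).headI = d 0 := by rw [List.ofFn_succ]; rfl
  rw [hhead]
  rcases Bool.eq_false_or_eq_true (d (Fin.last m)) with h | h <;> simp [h, and_comm]

lemma normSq_turnSum_add_turnSum_of_ne {n : ℕ} {b c : Bool} (hbc : b ≠ c) (x : ℤ) :
    normSq (turnSum n b b x + turnSum n b c x) =
      normSq (turnSum n b b x) + normSq (turnSum n b c x) := by
  simp [normSq_apply, im_turnSum_self, re_turnSum_of_ne hbc]

/-- Probability conservation: for each integer `t ≥ 1`, `∑_{x ∈ ℤ} P(x,t) = 1`. -/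
theorem probability_conservation (t : ℤ) (ht : 1 ≤ t) :
    ∑' x : ℤ, ‖a x t‖ ^ 2 = 1 := by
  obtain ⟨m, rfl⟩ : ∃ m : ℕ, t = m + 1 := ⟨(t - 1).toNat, by omega⟩
  have hnorm : ∀ x, ‖a x (m + 1)‖ ^ 2 =
      (2 ^ m)⁻¹ * (normSq (turnSum m true true x) + normSq (turnSum m true false x)) := by
    intro x
    rw [a, sum_cpaths_eq_turnSum, Complex.sq_norm, map_mul, map_mul, map_zpow₀, normSq_ofReal,
      Real.mul_self_sqrt zero_le_two, normSq_I,
      normSq_turnSum_add_turnSum_of_ne (by decide : true ≠ false) x]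
    simp [zpow_neg]
  simp_rw [hnorm, tsum_mul_left, tsum_normSq_turnSum_fixed_first]
  exact inv_mul_cancel₀ (by positivity)
end

section
/- For each (x,t) ∈ εℤ² with t > 0: a₁(x,t+ε,m,ε) = (1/√(1+m²ε²))·(a₁(x+ε,t,m,ε) + mε·a₂(x+ε,t,m,ε)) and a₂(x,t+ε,m,ε) = (1/√(1+m²ε²))·(a₂(x−ε,t,m,ε) − mε·a₁(x−ε,t,m,ε)). -/
/-!
Split the paths to `(x, t + 1)` according to their last move. Appending a move multiplies the
weight `(-i m ε) ^ turns` of a path by `1` if the move continues in the same direction and by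
`-i m ε` if it makes a turn. Since all paths start with a move to the right, the number of turns
is even exactly when the last move is to the right as well; hence paths ending with a right move
contribute purely imaginary terms to `i ∑ (-i m ε) ^ turns`, and those ending with a left move
real terms. So `a₂(x, t + 1)` collects the paths through `(x - 1, t)` and `a₁(x, t + 1)` those
through `(x + 1, t)`, and the turn factor `-i m ε` exchanges the two components.
-/

open scoped BigOperators

/-- Feynman checkers amplitude with mass: `a(x·ε, t·ε, m, ε)` written in lattice
coordinates, i.e. `am m ε x t = (1+m²ε²)^((1-t)/2) * i * ∑ₛ (-i·m·ε)^turns(s)`. -/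
noncomputable def am (m ε : ℝ) (x t : ℤ) : ℂ :=
  (Real.sqrt (1 + m ^ 2 * ε ^ 2) : ℂ) ^ (1 - t) * Complex.I *
    ∑ d ∈ cpaths x t, (-Complex.I * (m * ε)) ^ nturns d

namespace FeynmanCheckers

open Complex Finset

def listTurns (l : List Bool) : ℕ := (l.zip l.tail).countP fun p => p.1 != p.2

lemma nturns_eq_listTurns {n : ℕ} (d : Fin n → Bool) : nturns d = listTurns (List.ofFn d) := rfl

lemma listTurns_cons (b : Bool) (l : List Bool) :
    listTurns (b :: l) = (if b = l.headD b then 0 else 1) + listTurns l := by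
  cases l with
  | nil => simp [listTurns]
  | cons c l => by_cases h : b = c <;> simp [listTurns, h, add_comm]

lemma listTurns_append_pair (l : List Bool) (a b : Bool) :
    listTurns (l ++ [a, b]) = listTurns (l ++ [a]) + (if a = b then 0 else 1) := by
  induction l with
  | nil => cases a <;> cases b <;> simp [listTurns]
  | cons c l ih =>
    have hhead : (l ++ [a, b]).headD c = (l ++ [a]).headD c := by cases l <;> rfl
    rw [List.cons_append, listTurns_cons, ih, List.cons_append, listTurns_cons, hhead, add_assoc]

lemma even_listTurns_concat_iff (l : List Bool) (a : Bool) :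
    Even (listTurns (l ++ [a])) ↔ (l ++ [a]).headI = a := by
  induction l with
  | nil => simp [listTurns]
  | cons c l ih =>
    obtain ⟨d, l', hl⟩ := List.exists_cons_of_ne_nil (List.concat_ne_nil a l)
    rw [hl] at ih
    rw [List.cons_append, hl, listTurns_cons]
    cases a <;> cases c <;> cases d <;> simp_all

lemma ofFn_snoc {n : ℕ} (p : Fin n → Bool) (b : Bool) :
    List.ofFn (Fin.snoc p b : Fin (n + 1) → Bool) = List.ofFn p ++ [b] := by
  rw [List.ofFn_succ', Fin.snoc_last, List.concat_eq_append]
  simp only [Fin.snoc_castSucc]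

lemma ofFn_eq_concat {n : ℕ} (p : Fin (n + 1) → Bool) :
    List.ofFn p = List.ofFn (Fin.init p) ++ [p (Fin.last n)] := by
  rw [← ofFn_snoc, Fin.snoc_init_self]

lemma nturns_snoc {n : ℕ} (p : Fin (n + 1) → Bool) (b : Bool) :
    nturns (Fin.snoc p b : Fin (n + 2) → Bool) =
      nturns p + if p (Fin.last n) = b then 0 else 1 := by
  rw [nturns_eq_listTurns, nturns_eq_listTurns, ofFn_snoc, ofFn_eq_concat p, List.append_assoc]
  exact listTurns_append_pair _ _ _

lemma even_nturns_iff {n : ℕ} (p : Fin (n + 1) → Bool) :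
    Even (nturns p) ↔ (List.ofFn p).headI = p (Fin.last n) := by
  rw [nturns_eq_listTurns, ofFn_eq_concat p, even_listTurns_concat_iff]

lemma moveEndpoint_snoc {n : ℕ} (p : Fin n → Bool) (b : Bool) :
    moveEndpoint (Fin.snoc p b : Fin (n + 1) → Bool) = moveEndpoint p + if b then 1 else -1 := by
  simp [moveEndpoint, Fin.sum_univ_castSucc]

lemma headI_ofFn_snoc {n : ℕ} (p : Fin (n + 1) → Bool) (b : Bool) :
    (List.ofFn (Fin.snoc p b : Fin (n + 2) → Bool)).headI = (List.ofFn p).headI := by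
  simp [List.ofFn_succ]

lemma mem_cpaths {x t : ℤ} {d : Fin t.toNat → Bool} :
    d ∈ cpaths x t ↔ moveEndpoint d = x ∧ (List.ofFn d).headI = true := by
  simp [cpaths]

lemma sum_cpaths_succ {M : Type*} [AddCommMonoid M] (x : ℤ) (n : ℕ)
    (f : (Fin (n + 2) → Bool) → M) :
    ∑ d ∈ cpaths x ((n + 2 : ℕ) : ℤ), f d =
      ∑ p ∈ cpaths (x - 1) ((n + 1 : ℕ) : ℤ), f (Fin.snoc p true) +
        ∑ p ∈ cpaths (x + 1) ((n + 1 : ℕ) : ℤ), f (Fin.snoc p false) := by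
  have key : ∀ (b : Bool) (p : Fin (n + 1) → Bool), Fin.snoc p b ∈ cpaths x ((n + 2 : ℕ) : ℤ) ↔
      p ∈ cpaths (x - if b then 1 else -1) ((n + 1 : ℕ) : ℤ) := by
    intro b p
    rw [mem_cpaths, mem_cpaths, moveEndpoint_snoc, headI_ofFn_snoc, eq_sub_iff_add_eq]
  calc ∑ d ∈ cpaths x ((n + 2 : ℕ) : ℤ), f d
      = ∑ b, ∑ p : Fin (n + 1) → Bool,
          if Fin.snoc p b ∈ cpaths x ((n + 2 : ℕ) : ℤ) then f (Fin.snoc p b) else 0 := by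
        rw [← Fintype.sum_prod_type', ← Fintype.sum_ite_mem]
        exact Fintype.sum_equiv (Fin.snocEquiv fun _ => Bool).symm _ _ fun _ => by
          simp [Fin.snocEquiv]
    _ = _ := by
        simp only [key, Fintype.sum_bool, Fintype.sum_ite_mem, if_true, Bool.false_eq_true,
          if_false, sub_neg_eq_add]
        rfl

lemma im_neg_I_mul_pow_of_even (r : ℝ) {k : ℕ} (hk : Even k) : ((-I * r) ^ k).im = 0 := by
  obtain ⟨j, rfl⟩ := hk
  have hsq : (-I * r) ^ 2 = ((-r ^ 2 : ℝ) : ℂ) := by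
    push_cast
    ring_nf
    rw [I_sq]
    ring
  rw [← two_mul, pow_mul, hsq, ← ofReal_pow, ofReal_im]

lemma re_neg_I_mul_pow_of_odd (r : ℝ) {k : ℕ} (hk : Odd k) : ((-I * r) ^ k).re = 0 := by
  obtain ⟨j, rfl⟩ := hk
  rw [pow_succ, mul_re, im_neg_I_mul_pow_of_even r (even_two_mul j)]
  simp

def pathAmp (r : ℝ) {n : ℕ} (d : Fin n → Bool) : ℂ := I * (-I * r) ^ nturns d

lemma am_eq_sum_pathAmp (m ε : ℝ) (x t : ℤ) :
    am m ε x t = ((√(1 + m ^ 2 * ε ^ 2) ^ (1 - t) : ℝ) : ℂ) *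
      ∑ d ∈ cpaths x t, pathAmp (m * ε) d := by
  simp only [am, pathAmp, mul_sum, ofReal_zpow, ofReal_mul, mul_assoc]

lemma pathAmp_snoc (r : ℝ) {n : ℕ} (p : Fin (n + 1) → Bool) (b : Bool) :
    pathAmp r (Fin.snoc p b : Fin (n + 2) → Bool) =
      pathAmp r p * if p (Fin.last n) = b then 1 else -I * r := by
  rw [pathAmp, pathAmp, nturns_snoc, pow_add, mul_assoc]
  split_ifs <;> simp

section FirstMoveRight

variable (r : ℝ) {n : ℕ} {p : Fin (n + 1) → Bool} (hp : (List.ofFn p).headI = true)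
include hp

lemma re_pathAmp_of_last_eq_true (hl : p (Fin.last n) = true) : (pathAmp r p).re = 0 := by
  rw [pathAmp, I_mul_re, im_neg_I_mul_pow_of_even r ((even_nturns_iff p).2 (hp.trans hl.symm)),
    neg_zero]

lemma im_pathAmp_of_last_eq_false (hl : p (Fin.last n) = false) : (pathAmp r p).im = 0 := by
  have hodd : Odd (nturns p) := by
    rw [← Nat.not_even_iff_odd, even_nturns_iff, hp, hl]
    decide
  rw [pathAmp, I_mul_im, re_neg_I_mul_pow_of_odd r hodd]

lemma re_pathAmp_snoc_true : (pathAmp r (Fin.snoc p true : Fin (n + 2) → Bool)).re = 0 := by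
  cases hl : p (Fin.last n) <;>
    simp [pathAmp_snoc, hl, mul_re, re_pathAmp_of_last_eq_true r hp, im_pathAmp_of_last_eq_false r hp]

lemma im_pathAmp_snoc_false : (pathAmp r (Fin.snoc p false : Fin (n + 2) → Bool)).im = 0 := by
  cases hl : p (Fin.last n) <;>
    simp [pathAmp_snoc, hl, mul_im, re_pathAmp_of_last_eq_true r hp, im_pathAmp_of_last_eq_false r hp]

lemma re_pathAmp_snoc_false : (pathAmp r (Fin.snoc p false : Fin (n + 2) → Bool)).re =
    (pathAmp r p).re + r * (pathAmp r p).im := by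
  cases hl : p (Fin.last n) <;>
    simp [pathAmp_snoc, hl, mul_re, re_pathAmp_of_last_eq_true r hp, im_pathAmp_of_last_eq_false r hp,
      mul_comm]

lemma im_pathAmp_snoc_true : (pathAmp r (Fin.snoc p true : Fin (n + 2) → Bool)).im =
    (pathAmp r p).im - r * (pathAmp r p).re := by
  cases hl : p (Fin.last n) <;>
    simp [pathAmp_snoc, hl, mul_im, re_pathAmp_of_last_eq_true r hp, im_pathAmp_of_last_eq_false r hp,
      mul_comm]

end FirstMoveRight

lemma sum_re_pathAmp_succ (r : ℝ) (x : ℤ) (n : ℕ) :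
    ∑ d ∈ cpaths x ((n + 2 : ℕ) : ℤ), (pathAmp r d).re =
      ∑ p ∈ cpaths (x + 1) ((n + 1 : ℕ) : ℤ), ((pathAmp r p).re + r * (pathAmp r p).im) := by
  rw [sum_cpaths_succ, sum_eq_zero fun p hp => re_pathAmp_snoc_true r (mem_cpaths.1 hp).2, zero_add]
  exact sum_congr rfl fun p hp => re_pathAmp_snoc_false r (mem_cpaths.1 hp).2

lemma sum_im_pathAmp_succ (r : ℝ) (x : ℤ) (n : ℕ) :
    ∑ d ∈ cpaths x ((n + 2 : ℕ) : ℤ), (pathAmp r d).im =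
      ∑ p ∈ cpaths (x - 1) ((n + 1 : ℕ) : ℤ), ((pathAmp r p).im - r * (pathAmp r p).re) := by
  rw [sum_cpaths_succ, sum_eq_zero fun p hp => im_pathAmp_snoc_false r (mem_cpaths.1 hp).2, add_zero]
  exact sum_congr rfl fun p hp => im_pathAmp_snoc_true r (mem_cpaths.1 hp).2

end FeynmanCheckers

theorem dirac_equation_mass_general (m ε : ℝ) (x t : ℤ) (ht : 0 < t) :
    (am m ε x (t + 1)).re =
      (1 / Real.sqrt (1 + m ^ 2 * ε ^ 2)) *
        ((am m ε (x + 1) t).re + m * ε * (am m ε (x + 1) t).im) ∧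
    (am m ε x (t + 1)).im =
      (1 / Real.sqrt (1 + m ^ 2 * ε ^ 2)) *
        ((am m ε (x - 1) t).im - m * ε * (am m ε (x - 1) t).re) := by
  obtain ⟨n, rfl⟩ : ∃ n : ℕ, t = ((n + 1 : ℕ) : ℤ) := ⟨(t - 1).toNat, by omega⟩
  have hc : √(1 + m ^ 2 * ε ^ 2) ≠ 0 := by positivity
  have hpow : √(1 + m ^ 2 * ε ^ 2) ^ (1 - ((n + 2 : ℕ) : ℤ)) =
      1 / √(1 + m ^ 2 * ε ^ 2) * √(1 + m ^ 2 * ε ^ 2) ^ (1 - ((n + 1 : ℕ) : ℤ)) := by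
    rw [one_div, ← zpow_neg_one, ← zpow_add₀ hc]
    push_cast
    ring_nf
  rw [show ((n + 1 : ℕ) : ℤ) + 1 = ((n + 2 : ℕ) : ℤ) by push_cast; ring]
  simp only [FeynmanCheckers.am_eq_sum_pathAmp, Complex.re_ofReal_mul, Complex.im_ofReal_mul,
    Complex.re_sum, Complex.im_sum, FeynmanCheckers.sum_re_pathAmp_succ,
    FeynmanCheckers.sum_im_pathAmp_succ, Finset.sum_add_distrib, Finset.sum_sub_distrib,
    ← Finset.mul_sum]
  rw [hpow]
  constructor <;> ring

/-- Dirac equation for the model with mass. -/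
theorem dirac_equation_mass (m ε : ℝ) (hε : 0 < ε) (hm : 0 ≤ m) (x t : ℤ) (ht : 0 < t) :
    (am m ε x (t + 1)).re =
      (1 / Real.sqrt (1 + m ^ 2 * ε ^ 2)) *
        ((am m ε (x + 1) t).re + m * ε * (am m ε (x + 1) t).im) ∧
    (am m ε x (t + 1)).im =
      (1 / Real.sqrt (1 + m ^ 2 * ε ^ 2)) *
        ((am m ε (x - 1) t).im - m * ε * (am m ε (x - 1) t).re) :=
  dirac_equation_mass_general m ε x t ht
end

section
/- For each t ∈ εℤ with t > 0, Σ_{x∈εℤ} P(x,t,m,ε) = 1. -/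
open scoped BigOperators

/-!
Split the path sum according to the last move, `F_n(x, c) = pathSum z n x c`. Appending a move
gives the recursion `F_{n+1}(x, c) = F_n(x - δ_c, c) + z F_n(x - δ_c, !c)`. For purely imaginary
`z` (here `z = -imε`) the cross terms cancel, `‖u + zv‖² + ‖v + zu‖² = (1 + |z|²)(‖u‖² + ‖v‖²)`,
so `∑ₓ (|F_n(x, true)|² + |F_n(x, false)|²)` is multiplied by `1 + m²ε²` at each step, which
is exactly undone by the normalising factor of `am`. The same recursion shows that
`F_n(x, true)` is real and `F_n(x, false)` imaginary, so `|am|²` is the sum of their squares.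
-/

open Finset

def listTurns (l : List Bool) : ℕ := (l.zip l.tail).countP fun p => p.1 != p.2

lemma listTurns_cons_cons (a b : Bool) (l : List Bool) :
    listTurns (a :: b :: l) = listTurns (b :: l) + if a != b then 1 else 0 := by
  simp [listTurns, List.countP_cons]

lemma listTurns_append_pair (a b : Bool) : ∀ l : List Bool,
    listTurns (l ++ [a, b]) = listTurns (l ++ [a]) + if a != b then 1 else 0
  | [] => listTurns_cons_cons a b []
  | [x] => by
    simp only [List.cons_append, List.nil_append, listTurns_cons_cons]
    rw [show listTurns [b] = listTurns [a] from rfl]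
    ring
  | x :: y :: l => by
    have ih := listTurns_append_pair a b (y :: l)
    simp only [List.cons_append] at ih ⊢
    rw [listTurns_cons_cons, listTurns_cons_cons, ih]
    ring

lemma nturns_eq_listTurns {n : ℕ} (d : Fin n → Bool) : nturns d = listTurns (List.ofFn d) := rfl

lemma nturns_snoc {n : ℕ} (e : Fin (n + 1) → Bool) (b : Bool) :
    nturns (Fin.snoc e b : Fin (n + 2) → Bool) =
      nturns e + if e (Fin.last n) != b then 1 else 0 := by
  rw [nturns_eq_listTurns, nturns_eq_listTurns,
    List.ofFn_succ' (Fin.snoc e b : Fin (n + 2) → Bool)]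
  simp only [Fin.snoc_castSucc, Fin.snoc_last]
  rw [List.ofFn_succ' e]
  simp only [List.concat_eq_append, List.append_assoc, List.cons_append, List.nil_append]
  exact listTurns_append_pair _ _ _

lemma moveEndpoint_snoc {n : ℕ} (e : Fin n → Bool) (b : Bool) :
    moveEndpoint (Fin.snoc e b : Fin (n + 1) → Bool) = moveEndpoint e + if b then 1 else -1 := by
  simp [moveEndpoint, Fin.sum_univ_castSucc]

def paths (n : ℕ) (x : ℤ) : Finset (Fin (n + 1) → Bool) :=
  {d | moveEndpoint d = x ∧ d 0 = true}

noncomputable def pathSum (z : ℂ) (n : ℕ) (x : ℤ) (c : Bool) : ℂ :=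
  ∑ d ∈ paths n x with d (Fin.last n) = c, z ^ nturns d

lemma filter_paths_succ_last (n : ℕ) (x : ℤ) (c : Bool) :
    {d ∈ paths (n + 1) x | d (Fin.last (n + 1)) = c} =
      (paths n (x - if c then 1 else -1)).map
        ⟨(Fin.snoc · c), Fin.snoc_left_injective (α := fun _ ↦ Bool) c⟩ := by
  ext d
  simp only [paths, mem_filter, mem_univ, true_and, mem_map, Function.Embedding.coeFn_mk]
  constructor
  · rintro ⟨⟨hx, h0⟩, rfl⟩
    refine ⟨Fin.init d, ⟨?_, ?_⟩, Fin.snoc_init_self d⟩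
    · have h := moveEndpoint_snoc (Fin.init d) (d (Fin.last _))
      rw [Fin.snoc_init_self] at h
      omega
    · simpa [Fin.init] using h0
  · rintro ⟨e, ⟨hx, h0⟩, rfl⟩
    refine ⟨⟨?_, ?_⟩, Fin.snoc_last _ _⟩
    · rw [moveEndpoint_snoc, hx]; ring
    · rwa [← Fin.castSucc_zero, Fin.snoc_castSucc]

lemma pathSum_succ (z : ℂ) (n : ℕ) (x : ℤ) (c : Bool) :
    pathSum z (n + 1) x c =
      pathSum z n (x - if c then 1 else -1) c + z * pathSum z n (x - if c then 1 else -1) (!c) := by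
  rw [pathSum, filter_paths_succ_last, sum_map, pathSum, pathSum, sum_filter, sum_filter, mul_sum,
    ← sum_add_distrib]
  refine sum_congr rfl fun e _ => ?_
  simp only [Function.Embedding.coeFn_mk, nturns_snoc, pow_add]
  cases e (Fin.last n) <;> cases c <;> simp [mul_comm]

lemma pathSum_zero (z : ℂ) (x : ℤ) (c : Bool) :
    pathSum z 0 x c = if x = 1 ∧ c = true then 1 else 0 := by
  rw [pathSum, paths, sum_filter, sum_filter, ← (Equiv.funUnique (Fin 1) Bool).symm.sum_comp,
    Fintype.sum_bool]
  simp [moveEndpoint, nturns_eq_listTurns, listTurns, eq_comm, ite_and]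

section PurelyImaginary

variable {z : ℂ}

lemma norm_add_mul_sq_add_norm_add_mul_sq (hz : z.re = 0) (u v : ℂ) :
    ‖u + z * v‖ ^ 2 + ‖v + z * u‖ ^ 2 = (1 + ‖z‖ ^ 2) * (‖u‖ ^ 2 + ‖v‖ ^ 2) := by
  simp only [Complex.sq_norm, Complex.normSq_apply, Complex.add_re, Complex.add_im,
    Complex.mul_re, Complex.mul_im, hz]
  ring

lemma im_pathSum_true_and_re_pathSum_false (hz : z.re = 0) (n : ℕ) (x : ℤ) :
    (pathSum z n x true).im = 0 ∧ (pathSum z n x false).re = 0 := by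
  induction n generalizing x with
  | zero => constructor <;> rw [pathSum_zero] <;> split_ifs <;> simp_all
  | succ n ih =>
    simp [pathSum_succ, Complex.mul_re, Complex.mul_im, hz, (ih _).1, (ih _).2]

noncomputable def pathNormSq (z : ℂ) (n : ℕ) (x : ℤ) : ℝ :=
  ‖pathSum z n x true‖ ^ 2 + ‖pathSum z n x false‖ ^ 2

lemma hasSum_pathNormSq (hz : z.re = 0) (n : ℕ) :
    HasSum (pathNormSq z n) ((1 + ‖z‖ ^ 2) ^ n) := by
  induction n with
  | zero =>
    convert hasSum_single (f := pathNormSq z 0) 1 fun x hx => ?_ <;>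
      simp_all [pathNormSq, pathSum_zero]
  | succ n ih =>
    let G (c : Bool) (y : ℤ) : ℝ := ‖pathSum z n y c + z * pathSum z n y (!c)‖ ^ 2
    have hsplit (x : ℤ) : pathNormSq z (n + 1) x = G true (x - 1) + G false (x + 1) := by
      simp [pathNormSq, pathSum_succ, G]
    have hG : HasSum (G true + G false) ((1 + ‖z‖ ^ 2) ^ (n + 1)) := by
      rw [pow_succ', show G true + G false = fun y => (1 + ‖z‖ ^ 2) * pathNormSq z n y from
        funext fun y => norm_add_mul_sq_add_norm_add_mul_sq hz _ _]
      exact ih.mul_left _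
    have hT : Summable (G true) :=
      hG.summable.of_nonneg_of_le (fun _ => sq_nonneg _) fun _ =>
        le_add_of_nonneg_right (sq_nonneg _)
    have hF : Summable (G false) :=
      hG.summable.of_nonneg_of_le (fun _ => sq_nonneg _) fun _ =>
        le_add_of_nonneg_left (sq_nonneg _)
    rw [← (hT.hasSum.add hF.hasSum).unique hG, funext hsplit]
    have hT' : HasSum (fun x => G true (x - 1)) (∑' y, G true y) :=
      (Equiv.subRight (1 : ℤ)).hasSum_iff (f := G true) |>.mpr hT.hasSum
    have hF' : HasSum (fun x => G false (x + 1)) (∑' y, G false y) :=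
      (Equiv.addRight (1 : ℤ)).hasSum_iff (f := G false) |>.mpr hF.hasSum
    exact hT'.add hF'

end PurelyImaginary

lemma sum_cpaths_eq_pathSum (z : ℂ) (n : ℕ) (x : ℤ) :
    ∑ d ∈ cpaths x (n + 1), z ^ nturns d = pathSum z n x true + pathSum z n x false := by
  have hpaths : cpaths x (n + 1) = paths n x := by
    ext d
    simp [cpaths, paths, List.ofFn_succ]
  rw [hpaths, pathSum, pathSum, ← sum_filter_add_sum_filter_not _ fun d => d (Fin.last n) = true]
  simp only [Bool.not_eq_true]
  rfl

lemma norm_add_sq_of_im_eq_zero_of_re_eq_zero {u v : ℂ} (hu : u.im = 0) (hv : v.re = 0) :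
    ‖u + v‖ ^ 2 = ‖u‖ ^ 2 + ‖v‖ ^ 2 := by
  simp only [Complex.sq_norm, Complex.normSq_apply, Complex.add_re, Complex.add_im, hu, hv]
  ring

lemma norm_am_sq (m ε : ℝ) (n : ℕ) (x : ℤ) :
    ‖am m ε x (n + 1)‖ ^ 2 =
      ((1 + ‖-Complex.I * (m * ε)‖ ^ 2) ^ n)⁻¹ * pathNormSq (-Complex.I * (m * ε)) n x := by
  have hz : (-Complex.I * (m * ε)).re = 0 := by simp
  have hA : ‖-Complex.I * (m * ε)‖ ^ 2 = m ^ 2 * ε ^ 2 := by simp [mul_pow]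
  obtain ⟨hT, hF⟩ := im_pathSum_true_and_re_pathSum_false hz n x
  rw [am, sum_cpaths_eq_pathSum, norm_mul, norm_mul, mul_pow, mul_pow,
    norm_add_sq_of_im_eq_zero_of_re_eq_zero hT hF, hA, Complex.norm_I, norm_zpow,
    Complex.norm_real, Real.norm_of_nonneg (Real.sqrt_nonneg _), show (1 : ℤ) - (n + 1) = -n by ring, zpow_neg,
    zpow_natCast, inv_pow, ← pow_mul, mul_comm n, pow_mul, Real.sq_sqrt (by positivity)]
  simp [pathNormSq]

theorem probability_conservation_mass_general (m ε : ℝ)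
    (t : ℤ) (ht : 0 < t) :
    ∑' x : ℤ, ‖am m ε x t‖ ^ 2 = 1 := by
  obtain ⟨n, rfl⟩ : ∃ n : ℕ, t = n + 1 := ⟨(t - 1).toNat, by omega⟩
  have hz : (-Complex.I * (m * ε)).re = 0 := by simp
  simp_rw [norm_am_sq]
  rw [((hasSum_pathNormSq hz n).mul_left _).tsum_eq, inv_mul_cancel₀ (by positivity)]

/-- Probability conservation for the model with mass. -/
theorem probability_conservation_mass (m ε : ℝ) (hε : 0 < ε) (hm : 0 ≤ m)
    (t : ℤ) (ht : 0 < t) :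
    ∑' x : ℤ, ‖am m ε x t‖ ^ 2 = 1 :=
  probability_conservation_mass_general m ε t ht
end
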